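/- arXiv:2310.05579 — 2 statements merged into one kernel-verified Lean document; each statement's English description precedes it below -/
import Mathlib

section
/- Let G be a finite group, H ≤ G, and β an irreducible character of H with β(1) > 1 such that β^G = χ is irreducible with χ(1) = m(G). Then H is normal in G and G' = H'. -/
open scoped BigOperators
open CategoryTheory

noncomputable section

/-- `χ : G → ℂ` is the character of some finite-dimensional complex representation. -/
def IsChar (G : Type) [Group G] (χ : G → ℂ) : Prop :=
  ∃ V : FDRep ℂ G, χ = V.character

/-- `χ : G → ℂ` is the character of an irreducible (simple) finite-dimensional
complex representation. -/
def IsIrrChar (G : Type) [Group G] (χ : G → ℂ) : Prop :=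
  ∃ V : FDRep ℂ G, Simple V ∧ χ = V.character

/-- The minimal degree `m(G)` of a non-linear irreducible complex character of `G`. -/
def minDeg (G : Type) [Group G] : ℕ :=
  sInf {n : ℕ | 1 < n ∧ ∃ χ : G → ℂ, IsIrrChar G χ ∧ χ 1 = (n : ℂ)}

/-- The kernel of a character, as a set: `{g | χ g = χ 1}`. -/
def charKerSet {G : Type} [Group G] (χ : G → ℂ) : Set G := {g | χ g = χ 1}

/-- The kernel of (the representation affording) a character, as a subgroup. -/
def repKer {G : Type} [Group G] (V : FDRep ℂ G) : Subgroup G :=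
  (Representation.asGroupHom V.ρ).ker

instance {G : Type} [Group G] (V : FDRep ℂ G) : (repKer V).Normal :=
  (Representation.asGroupHom V.ρ).normal_ker

open Classical in
/-- The character of `G` induced from the class function `β` of the subgroup `H`. -/
def indChar {G : Type} [Group G] [Fintype G] (H : Subgroup G) (β : H → ℂ) : G → ℂ :=
  fun g => (Nat.card H : ℂ)⁻¹ *
    ∑ x : G, if h : x⁻¹ * g * x ∈ H then β ⟨x⁻¹ * g * x, h⟩ else 0

/-- A character of `G` is primitive if it is not induced from a character
of a proper subgroup. -/
def IsPrimitiveChar (G : Type) [Group G] [Fintype G] (χ : G → ℂ) : Prop :=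
  ∀ H : Subgroup G, H ≠ ⊤ → ∀ β : H → ℂ, IsChar H β → indChar H β ≠ χ

/-- The usual inner product of class functions. -/
def charInner (G : Type) [Group G] [Fintype G] (φ ψ : G → ℂ) : ℂ :=
  (Nat.card G : ℂ)⁻¹ * ∑ g : G, φ g * (starRingEnd ℂ) (ψ g)

/-- `χ` is a sum of linear characters of `G`. -/
def IsSumOfLinear (G : Type) [Group G] (χ : G → ℂ) : Prop :=
  ∃ s : Multiset (G → ℂ), (∀ β ∈ s, IsChar G β ∧ β 1 = 1) ∧ χ = s.sum

/-- The Fitting subgroup: the join of all nilpotent normal subgroups. -/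
def fittingSubgroup (G : Type) [Group G] : Subgroup G :=
  ⨆ (N : Subgroup G) (_ : N.Normal) (_ : Group.IsNilpotent N), N

/-- `O_p(G)`: the join of all normal `p`-subgroups. -/
def pCore (p : ℕ) (G : Type) [Group G] : Subgroup G :=
  ⨆ (N : Subgroup G) (_ : N.Normal) (_ : IsPGroup p N), N

/-- An extraspecial `p`-group: `Z(P) = P' = Φ(P)` has order `p`. -/
def IsExtraspecial (p : ℕ) (P : Type) [Group P] : Prop :=
  IsPGroup p P ∧ Subgroup.center P = commutator P ∧
    Subgroup.center P = frattini P ∧ Nat.card (Subgroup.center P) = p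

/-!
From `χ(1) = |G : H| β(1) = m(G)` and `β(1) > 1` we get `|G : H| < m(G)`. By Maschke's theorem a
representation of dimension below `m(G)` is a sum of irreducible ones of dimension `1`, so `G'`
acts trivially on it. The representation induced from a linear character `ψ` of `H` has dimension
`|G : H|`; letting `G'` act on the function that is `ψ` on `H` and `0` off `H` shows `G' ≤ ker ψ`.
With `ψ = 1` this gives `G' ≤ H`, so `H ⊴ G`, and since the linear characters of `H` separate the
points of `H / H'`, also `G' ≤ H'`.
-/

open Module

theorem indChar_one {G : Type} [Group G] [Fintype G] (H : Subgroup G) (β : H → ℂ) :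
    indChar H β 1 = H.index * β 1 := by
  have hcard : (Nat.card H : ℂ) * H.index = Fintype.card G := by
    rw [← Nat.cast_mul, Subgroup.card_mul_index, Nat.card_eq_fintype_card]
  have hH : (Nat.card H : ℂ) ≠ 0 := Nat.cast_ne_zero.mpr Nat.card_pos.ne'
  simp only [indChar, mul_one, inv_mul_cancel, H.one_mem, dite_true]
  change _ * ∑ _x : G, β 1 = _
  rw [Finset.sum_const, Finset.card_univ, nsmul_eq_mul, ← hcard]
  field_simp

theorem Module.End.commute_of_finrank_eq_one {K M : Type*} [Field K] [AddCommGroup M]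
    [Module K M] (h : finrank K M = 1) (f g : Module.End K M) : Commute f g := by
  obtain ⟨c, rfl⟩ := (f.existsUnique_eq_smul_id_of_finrank_eq_one h).exists
  obtain ⟨d, rfl⟩ := (g.existsUnique_eq_smul_id_of_finrank_eq_one h).exists
  exact ((Commute.one_right 1).smul_left c).smul_right d

theorem mem_commutator_of_forall_monoidHom_apply_eq_one {H : Type*} [Group H] [Finite H] {x : H}
    (hx : ∀ ψ : H →* ℂ, ψ x = 1) : x ∈ commutator H := by
  by_contra hx'
  have : Finite (Abelianization H) := inferInstanceAs (Finite (H ⧸ commutator H))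
  have : NeZero (Monoid.exponent (Abelianization H) : ℂ) :=
    ⟨Nat.cast_ne_zero.mpr Monoid.exponent_ne_zero_of_finite⟩
  obtain ⟨φ, hφ⟩ := CommGroup.exists_apply_ne_one_of_hasEnoughRootsOfUnity (Abelianization H) ℂ
    (mt (QuotientGroup.eq_one_iff x).mp hx')
  exact hφ (Units.val_eq_one.mp (hx ((Units.coeHom ℂ).comp (φ.comp Abelianization.of))))

theorem Subgroup.le_map_commutator_of_forall_le_map_ker {G : Type*} [Group G] {H K : Subgroup G}
    [Finite H] (hK : ∀ ψ : H →* ℂ, K ≤ ψ.ker.map H.subtype) :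
    K ≤ (_root_.commutator H).map H.subtype := by
  intro c hc
  obtain ⟨x, -, rfl⟩ := hK 1 hc
  exact mem_map_of_mem _ (mem_commutator_of_forall_monoidHom_apply_eq_one fun ψ =>
    (mem_map_iff_mem H.subtype_injective).mp (hK ψ hc))

section Subrepresentations

variable {G K W : Type*} [Monoid G] [Field K] [AddCommGroup W] [Module K W]
  {ρ : Representation K G W}

theorem Subrepresentation.exists_ne_bot_ne_top [Nontrivial W] (h : ¬ ρ.IsIrreducible) :
    ∃ σ : Subrepresentation ρ, σ ≠ ⊥ ∧ σ ≠ ⊤ := by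
  by_contra! hσ
  have : Nontrivial (Subrepresentation ρ) :=
    ⟨⊥, ⊤, fun h => bot_ne_top (α := Submodule K W) congr(($h).toSubmodule)⟩
  exact h ⟨fun σ => (em (σ = ⊥)).imp_right (hσ σ)⟩

theorem Representation.commute_of_commute_of_sup_eq_top {σ τ : Subrepresentation ρ}
    (hστ : σ ⊔ τ = ⊤) {g h : G} (hσ : Commute (σ.toRepresentation g) (σ.toRepresentation h))
    (hτ : Commute (τ.toRepresentation g) (τ.toRepresentation h)) : Commute (ρ g) (ρ h) := by
  ext v
  have hv : v ∈ σ.toSubmodule ⊔ τ.toSubmodule := by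
    rw [← Subrepresentation.toSubmodule_sup, hστ]
    trivial
  obtain ⟨x, hx, y, hy, rfl⟩ := Submodule.mem_sup.mp hv
  have hx' := congr(Subtype.val ($(hσ.eq) ⟨x, hx⟩))
  have hy' := congr(Subtype.val ($(hτ.eq) ⟨y, hy⟩))
  simp only [Module.End.mul_apply, map_add] at hx' hy' ⊢
  exact congr($hx' + $hy')

end Subrepresentations

namespace Representation

section SmallDimension

variable {G : Type} [Group G] [Finite G] {V : Type} [AddCommGroup V] [Module ℂ V]
  [FiniteDimensional ℂ V]

theorem IsIrreducible.simple_fdRep (ρ : Representation ℂ G V) [ρ.IsIrreducible] :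
    Simple (FDRep.of ρ) := by
  rw [FDRep.simple_iff_end_is_rank_one, ← (FDRep.forget₂HomLinearEquiv _ _).finrank_eq,
    (Rep.homLinearEquiv _ _).finrank_eq]
  exact IsIrreducible.finrank_intertwiningMap_self ρ

theorem IsIrreducible.minDeg_le_finrank (ρ : Representation ℂ G V) [ρ.IsIrreducible]
    (h : 1 < finrank ℂ V) : minDeg G ≤ finrank ℂ V :=
  Nat.sInf_le ⟨h, _, ⟨FDRep.of ρ, IsIrreducible.simple_fdRep ρ, rfl⟩, FDRep.char_one _⟩

theorem commute_of_finrank_lt_minDeg (ρ : Representation ℂ G V) (hV : finrank ℂ V < minDeg G)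
    (g h : G) : Commute (ρ g) (ρ h) := by
  induction hn : finrank ℂ V using Nat.strong_induction_on generalizing V with | _ n ih
  subst hn
  rcases subsingleton_or_nontrivial V with _ | _
  · exact Subsingleton.elim (α := Module.End ℂ V) _ _
  by_cases hirr : ρ.IsIrreducible
  · refine Module.End.commute_of_finrank_eq_one ?_ _ _
    have := IsIrreducible.minDeg_le_finrank ρ
    have := finrank_pos (R := ℂ) (M := V)
    omega
  obtain ⟨σ, hσ, hσ'⟩ := Subrepresentation.exists_ne_bot_ne_top hirr
  have : ComplementedLattice (Subrepresentation ρ) :=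
    (ρ.isSemisimpleRepresentation_iff_isSemisimpleModule_asModule).mpr inferInstance
  obtain ⟨τ, hστ⟩ := exists_isCompl σ
  have hτ' : τ ≠ ⊤ := fun h => hσ (disjoint_top.mp (h ▸ hστ.disjoint))
  have hlt : ∀ π : Subrepresentation ρ, π ≠ ⊤ → finrank ℂ π.toSubmodule < finrank ℂ V :=
    fun π hπ => Submodule.finrank_lt fun h => hπ (Subrepresentation.toSubmodule_injective h)
  exact commute_of_commute_of_sup_eq_top hστ.sup_eq_top
    (ih _ (hlt σ hσ') _ ((hlt σ hσ').trans hV) rfl) (ih _ (hlt τ hτ') _ ((hlt τ hτ').trans hV) rfl)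

theorem commutator_le_ker_of_finrank_lt_minDeg (ρ : Representation ℂ G V)
    (hV : finrank ℂ V < minDeg G) : commutator G ≤ ρ.asGroupHom.ker := by
  rw [commutator_def, Subgroup.commutator_le]
  intro g _ h _
  rw [MonoidHom.mem_ker, map_commutatorElement, commutatorElement_eq_one_iff_commute,
    ← Commute.units_val_iff, asGroupHom_apply, asGroupHom_apply]
  exact ρ.commute_of_finrank_lt_minDeg hV g h

end SmallDimension

section Coinduced

variable {G : Type} [Group G] {H : Subgroup G}

def ofLinearChar {k H : Type*} [CommSemiring k] [Monoid H] (ψ : H →* k) : Representation k H k :=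
  (Algebra.lmul k k).toMonoidHom.comp ψ

theorem finrank_coindV_le [Finite G] {k A : Type*} [Field k] [AddCommGroup A] [Module k A]
    [Module.Finite k A] (σ : Representation k H A) :
    finrank k (coindV H.subtype σ) ≤ H.index * finrank k A := by
  have := Fintype.ofFinite (Quotient (QuotientGroup.rightRel H))
  let Φ : coindV H.subtype σ →ₗ[k] Quotient (QuotientGroup.rightRel H) → A :=
    (LinearMap.funLeft k A Quotient.out).comp (coindV H.subtype σ).subtype
  have hΦ : Function.Injective Φ := by
    rw [← LinearMap.ker_eq_bot, eq_bot_iff]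
    intro f hf
    ext x
    obtain ⟨h, hx⟩ : ∃ h : H, x = h * (⟦x⟧ : Quotient (QuotientGroup.rightRel H)).out :=
      ⟨⟨_, QuotientGroup.rightRel_apply.mp (Quotient.mk_out x)⟩, by simp⟩
    rw [hx]
    refine (f.2 h _).trans ?_
    rw [show f.1 _ = 0 from congr_fun hf ⟦x⟧, map_zero]
    rfl
  calc finrank k (coindV H.subtype σ) ≤ finrank k (Quotient (QuotientGroup.rightRel H) → A) :=
        LinearMap.finrank_le_finrank_of_injective hΦ
    _ = H.index * finrank k A := by
        rw [Module.finrank_pi_fintype, Finset.sum_const, Finset.card_univ, smul_eq_mul,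
          ← Nat.card_eq_fintype_card,
          Nat.card_congr (QuotientGroup.quotientRightRelEquivQuotientLeftRel H), Subgroup.index]

theorem mem_map_ker_of_coind_eq_one {k : Type*} [Field k] (ψ : H →* k) {c : G}
    (hc : coind H.subtype (ofLinearChar ψ) c = 1) : c ∈ ψ.ker.map H.subtype := by
  classical
  let f : G → k := fun x => if hx : x ∈ H then ψ ⟨x, hx⟩ else 0
  have hf : f ∈ coindV H.subtype (ofLinearChar ψ) := by
    intro h x
    show f (h * x) = ψ h * f x
    simp only [f]
    by_cases hx : x ∈ H
    · rw [dif_pos hx, dif_pos (H.mul_mem h.2 hx)]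
      exact map_mul ψ h ⟨x, hx⟩
    · rw [dif_neg hx, dif_neg ((H.mul_mem_cancel_left h.2).not.mpr hx), mul_zero]
  have hfc : f (1 * c) = f 1 := congr_fun congr(Subtype.val ($hc ⟨f, hf⟩)) 1
  have hf1 : f 1 = 1 := (dif_pos H.one_mem).trans (map_one ψ)
  rw [one_mul, hf1] at hfc
  by_cases hcH : c ∈ H
  · exact ⟨⟨c, hcH⟩, (dif_pos hcH).symm.trans hfc, rfl⟩
  · exact absurd ((dif_neg hcH).symm.trans hfc) zero_ne_one

theorem commutator_le_map_ker_of_index_lt_minDeg [Finite G] (hH : H.index < minDeg G)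
    (ψ : H →* ℂ) : commutator G ≤ ψ.ker.map H.subtype := by
  have hdim : finrank ℂ (coindV H.subtype (ofLinearChar ψ)) < minDeg G :=
    ((finrank_coindV_le _).trans (by rw [finrank_self, mul_one])).trans_lt hH
  intro c hc
  have hker := (coind H.subtype (ofLinearChar ψ)).commutator_le_ker_of_finrank_lt_minDeg hdim hc
  refine mem_map_ker_of_coind_eq_one ψ ?_
  rw [← asGroupHom_apply, MonoidHom.mem_ker.mp hker, Units.val_one]

end Coinduced

end Representation

theorem stmt7_general (G : Type) [Group G] [Fintype G] (H : Subgroup G) (β : ↥H → ℂ)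
    (d : ℕ) (hd : β 1 = (d : ℂ)) (hd1 : 1 < d)
    (hdeg : indChar H β 1 = (minDeg G : ℂ)) :
    H.Normal ∧ commutator G = (commutator ↥H).map H.subtype := by
  have hm : (minDeg G : ℂ) = (H.index * d : ℕ) := by rw [← hdeg, indChar_one, hd, Nat.cast_mul]
  have hidx : H.index < minDeg G := Nat.cast_injective hm ▸
    lt_mul_of_one_lt_right (Nat.pos_of_ne_zero H.index_ne_zero_of_finite) hd1
  have hG' : commutator G ≤ (commutator H).map H.subtype :=
    Subgroup.le_map_commutator_of_forall_le_map_ker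
      (Representation.commutator_le_map_ker_of_index_lt_minDeg hidx)
  refine ⟨.of_commutator_le G (hG'.trans (Subgroup.map_subtype_le _)), hG'.antisymm ?_⟩
  rw [H.map_subtype_commutator]
  exact Subgroup.commutator_mono le_top le_top

/-- If `β ∈ Irr(H)` is non-linear and `β^G` is irreducible of degree `m(G)`, then
`H ⊴ G` and `G' = H'`. -/
theorem stmt7 (G : Type) [Group G] [Fintype G] (H : Subgroup G) (β : ↥H → ℂ)
    (hβ : IsIrrChar ↥H β) (d : ℕ) (hd : β 1 = (d : ℂ)) (hd1 : 1 < d)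
    (hirr : IsIrrChar G (indChar H β)) (hdeg : indChar H β 1 = (minDeg G : ℂ)) :
    H.Normal ∧ commutator G = (commutator ↥H).map H.subtype :=
  stmt7_general G H β d hd hd1 hdeg

end
end

section
/- Let G be a finite group and χ an irreducible character with χ(1) = m(G) induced from a character β of a subgroup H with β(1) > 1. Then |G:H| < m(G), and hence (1_H)^G is a sum of linear characters and G' ≤ H. -/
open scoped BigOperators
open CategoryTheory

noncomputable section

/-!
The degree formula for induced characters gives `m(G) = χ(1) = |G:H| β(1) > |G:H|`. The
permutation character `(1_H)^G` has degree `|G:H| < m(G)`, so by Maschke's theorem it splits into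
irreducible constituents, all of degree `< m(G)` and hence linear. Linear characters are trivial on
`G'`, so `(1_H)^G` takes its full value `|G:H|` on `G'`: every element of `G'` fixes every coset
of `H`, in particular `H` itself.
-/

open Module MulAction

namespace Subrepresentation

variable {k G V : Type*} [Field k] [Monoid G] [AddCommGroup V] [Module k V]
  {ρ : Representation k G V}

def mapSubtype (σ : Subrepresentation ρ) (τ : Subrepresentation σ.toRepresentation) :
    Subrepresentation ρ where
  toSubmodule := τ.toSubmodule.map σ.toSubmodule.subtype
  apply_mem_toSubmodule g := by
    rintro _ ⟨v, hv, rfl⟩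
    exact ⟨σ.toRepresentation g v, τ.apply_mem_toSubmodule g hv, rfl⟩

theorem toSubmodule_strictMono :
    StrictMono (toSubmodule : Subrepresentation ρ → Submodule k V) :=
  fun _ _ h => h

instance [FiniteDimensional k V] : IsAtomic (Subrepresentation ρ) :=
  isAtomic_of_orderBot_wellFounded_lt
    (@wellFounded_lt _ _ toSubmodule_strictMono.wellFoundedLT)

theorem isIrreducible_toRepresentation {σ : Subrepresentation ρ} (hσ : IsAtom σ) :
    σ.toRepresentation.IsIrreducible := by
  have hinj : Function.Injective σ.mapSubtype := fun _ _ h => toSubmodule_injective <|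
    Submodule.map_injective_of_injective σ.toSubmodule.injective_subtype (congrArg toSubmodule h)
  have hbot : σ.mapSubtype ⊥ = ⊥ := toSubmodule_injective (Submodule.map_bot _)
  have htop : σ.mapSubtype ⊤ = σ := toSubmodule_injective (Submodule.map_subtype_top _)
  have : Nontrivial (Subrepresentation σ.toRepresentation) :=
    ⟨⊥, ⊤, fun h => hσ.1 (by rw [← htop, ← h, hbot])⟩
  refine ⟨fun τ => ?_⟩
  have hle : σ.mapSubtype τ ≤ σ := Submodule.map_subtype_le _ τ.toSubmodule
  rcases hσ.le_iff.1 hle with h | h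
  · exact .inl (hinj (h.trans hbot.symm))
  · exact .inr (hinj (h.trans htop.symm))

theorem isCompl_toSubmodule {σ τ : Subrepresentation ρ} (h : IsCompl σ τ) :
    IsCompl σ.toSubmodule τ.toSubmodule :=
  ⟨disjoint_iff.2 (congrArg toSubmodule (disjoint_iff.1 h.1)),
    codisjoint_iff.2 (congrArg toSubmodule (codisjoint_iff.1 h.2))⟩

end Subrepresentation

namespace Representation

variable {k G V : Type*} [Field k] [AddCommGroup V] [Module k V]

theorem character_eq_add_of_isCompl [Monoid G] [FiniteDimensional k V]
    {ρ : Representation k G V} {σ τ : Subrepresentation ρ} (h : IsCompl σ τ) :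
    ρ.character = σ.toRepresentation.character + τ.toRepresentation.character := by
  funext g
  have hint : DirectSum.IsInternal fun b : Bool => cond b σ.toSubmodule τ.toSubmodule :=
    (DirectSum.isInternal_submodule_iff_isCompl _ (i := true) (j := false) (by decide)
      (by ext b; cases b <;> simp)).2 (Subrepresentation.isCompl_toSubmodule h)
  rw [character, LinearMap.trace_eq_sum_trace_restrict hint (f := ρ g)
    (fun b => by cases b <;> exact fun v hv => Subrepresentation.apply_mem_toSubmodule _ g hv),
    Fintype.sum_bool]
  rfl

theorem commutator_le_ker_asGroupHom [Group G] (ρ : Representation k G V)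
    (hV : finrank k V = 1) : commutator G ≤ ρ.asGroupHom.ker := by
  have hcomm (u v : Module.End k V) : Commute u v := by
    obtain ⟨c, rfl, -⟩ := u.existsUnique_eq_smul_id_of_finrank_eq_one hV
    obtain ⟨d, rfl, -⟩ := v.existsUnique_eq_smul_id_of_finrank_eq_one hV
    ext; simp [smul_smul, mul_comm]
  rw [commutator_def, Subgroup.commutator_le]
  intro a _ b _
  rw [MonoidHom.mem_ker, map_commutatorElement, commutatorElement_eq_one_iff_mul_comm]
  exact Units.ext (hcomm _ _).eq

end Representation

section SmallRepresentations

variable {G : Type} [Group G] {V : Type} [AddCommGroup V] [Module ℂ V] [FiniteDimensional ℂ V]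

theorem Representation.simple_of_isIrreducible (ρ : Representation ℂ G V) [ρ.IsIrreducible] :
    Simple (FDRep.of ρ) := by
  let F := forget₂ (FDRep ℂ G) (Rep ℂ G) ⋙ Rep.toModuleMonoidAlgebra
  have : Simple (F.obj (FDRep.of ρ)) := by
    rw [simple_iff_isSimpleModule']
    exact ρ.irreducible_iff_isSimpleModule_asModule.mp ‹_›
  exact Functor.simple_of_simple_obj F _

theorem minDeg_le_finrank (ρ : Representation ℂ G V) [ρ.IsIrreducible]
    (h : 1 < finrank ℂ V) : minDeg G ≤ finrank ℂ V :=
  Nat.sInf_le ⟨h, ρ.character, ⟨FDRep.of ρ, ρ.simple_of_isIrreducible, rfl⟩, ρ.char_one⟩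

theorem isSumOfLinear_character_of_finrank_lt_minDeg [Finite G] (ρ : Representation ℂ G V)
    (hρ : finrank ℂ V < minDeg G) : IsSumOfLinear G ρ.character := by
  induction hn : finrank ℂ V using Nat.strong_induction_on generalizing V with
  | _ n ih =>
    obtain hbot | ⟨σ, hσ, -⟩ := IsAtomic.eq_bot_or_exists_atom_le (⊤ : Subrepresentation ρ)
    · have : Subsingleton V :=
        (Submodule.subsingleton_iff ℂ).mp <| subsingleton_iff_bot_eq_top.mp
          (congrArg Subrepresentation.toSubmodule hbot).symm
      refine ⟨0, by simp, funext fun g => ?_⟩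
      simp [Representation.character, Subsingleton.elim (ρ g) 0]
    · have := Subrepresentation.isIrreducible_toRepresentation hσ
      obtain ⟨τ, hτ⟩ := exists_isCompl σ
      have hdim : finrank ℂ σ.toSubmodule + finrank ℂ τ.toSubmodule = n :=
        hn ▸ Submodule.finrank_add_eq_of_isCompl (Subrepresentation.isCompl_toSubmodule hτ)
      have hσ0 : finrank ℂ σ.toSubmodule ≠ 0 := fun h =>
        hσ.1 (Subrepresentation.toSubmodule_injective (Submodule.finrank_eq_zero.mp h))
      have hσ1 : finrank ℂ σ.toSubmodule = 1 := by
        by_contra h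
        have := minDeg_le_finrank σ.toRepresentation (by omega)
        omega
      obtain ⟨s, hs, hsum⟩ := ih _ (by omega) τ.toRepresentation (by omega) rfl
      refine ⟨σ.toRepresentation.character ::ₘ s, ?_, ?_⟩
      · refine Multiset.forall_mem_cons.mpr ⟨⟨⟨FDRep.of σ.toRepresentation, rfl⟩, ?_⟩, hs⟩
        rw [Representation.char_one, hσ1, Nat.cast_one]
      · rw [Multiset.sum_cons, ← hsum]
        exact Representation.character_eq_add_of_isCompl hτ

end SmallRepresentations

theorem IsSumOfLinear.apply_eq_apply_one_of_mem_commutator {G : Type} [Group G] {χ : G → ℂ}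
    (hχ : IsSumOfLinear G χ) {g : G} (hg : g ∈ commutator G) : χ g = χ 1 := by
  obtain ⟨s, hs, rfl⟩ := hχ
  simp only [Pi.multiset_sum_apply]
  refine congrArg Multiset.sum (Multiset.map_congr rfl fun ψ hψ => ?_)
  obtain ⟨⟨V, rfl⟩, h1⟩ := hs ψ hψ
  have hV : finrank ℂ V = 1 := by exact_mod_cast (FDRep.char_one V).symm.trans h1
  have hρ : V.ρ g = 1 := Units.ext_iff.mp (Representation.commutator_le_ker_asGroupHom V.ρ hV hg)
  simp only [FDRep.character, hρ, map_one]

def permRep (k G α : Type*) [CommSemiring k] [Group G] [MulAction G α] :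
    Representation k G (α → k) where
  toFun g := LinearMap.funLeft k k (g⁻¹ • ·)
  map_one' := by ext; simp
  map_mul' g h := by ext; simp [mul_smul]

theorem permRep_character_apply {k G α : Type*} [Field k] [Group G] [MulAction G α] [Finite α]
    (g : G) : (permRep k G α).character g = Nat.card (fixedBy α g) := by
  classical
  have := Fintype.ofFinite α
  rw [Representation.character, LinearMap.trace_eq_matrix_trace k (Pi.basisFun k α),
    LinearMap.toMatrix_eq_toMatrix', Matrix.trace, ← fixedBy_inv]
  simp [LinearMap.toMatrix'_apply, permRep, LinearMap.funLeft_apply, Pi.single_apply, eq_comm,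
    fixedBy]

theorem QuotientGroup.mk_mem_fixedBy_iff {G : Type*} [Group G] {H : Subgroup G} {g x : G} :
    (x : G ⧸ H) ∈ fixedBy (G ⧸ H) g ↔ x⁻¹ * g * x ∈ H := by
  rw [mem_fixedBy, MulAction.Quotient.smul_mk, QuotientGroup.eq, ← H.inv_mem_iff]
  simp [mul_assoc]

section InducedCharacters

variable {G : Type} [Group G] [Fintype G]

theorem indChar_apply_one (H : Subgroup G) (β : H → ℂ) :
    indChar H β 1 = H.index * β 1 := by
  classical
  have hH : (Nat.card H : ℂ) ≠ 0 := Nat.cast_ne_zero.mpr Nat.card_pos.ne'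
  have hG : (Fintype.card G : ℂ) = Nat.card H * H.index := by
    rw [← Nat.cast_mul, H.card_mul_index, Nat.card_eq_fintype_card]
  have hterm (x : G) : (if h : x⁻¹ * 1 * x ∈ H then β ⟨_, h⟩ else 0) = β 1 := by
    simp_rw [mul_one, inv_mul_cancel, dif_pos H.one_mem]
    rfl
  rw [indChar, Finset.sum_congr rfl fun x _ => hterm x, Finset.sum_const, Finset.card_univ,
    nsmul_eq_mul, hG]
  field_simp

theorem indChar_one_apply (H : Subgroup G) (g : G) :
    indChar H (fun _ => 1) g = Nat.card (fixedBy (G ⧸ H) g) := by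
  classical
  have hH : (Nat.card H : ℂ) ≠ 0 := Nat.cast_ne_zero.mpr Nat.card_pos.ne'
  have hcount :
      Nat.card {x : G // x⁻¹ * g * x ∈ H} = Nat.card H * Nat.card (fixedBy (G ⧸ H) g) :=
    QuotientGroup.card_preimage_mk H _ ▸ Nat.card_congr (Equiv.subtypeEquivRight fun _ =>
      QuotientGroup.mk_mem_fixedBy_iff.symm)
  rw [indChar]
  simp only [dite_eq_ite, Finset.sum_boole]
  rw [← Fintype.card_subtype, ← Nat.card_eq_fintype_card, hcount, Nat.cast_mul]
  field_simp

theorem indChar_one_eq_character_permRep (H : Subgroup G) :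
    indChar H (fun _ => 1) = (permRep ℂ G (G ⧸ H)).character :=
  funext fun g => by rw [indChar_one_apply, permRep_character_apply]

theorem mem_of_indChar_one_apply_eq (H : Subgroup G) {g : G}
    (h : indChar H (fun _ => 1) g = indChar H (fun _ => 1) 1) : g ∈ H := by
  rw [indChar_one_apply, indChar_one_apply, fixedBy_one_eq_univ, Nat.cast_inj,
    Nat.card_coe_set_eq, Nat.card_coe_set_eq, Set.ncard_univ, ← Set.eq_univ_iff_ncard] at h
  have h1 : ((1 : G) : G ⧸ H) ∈ fixedBy (G ⧸ H) g := h ▸ Set.mem_univ _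
  simpa using QuotientGroup.mk_mem_fixedBy_iff.mp h1

end InducedCharacters

theorem stmt19_general (G : Type) [Group G] [Fintype G] (H : Subgroup G) (β : ↥H → ℂ)
    (d : ℕ) (hd : β 1 = (d : ℂ)) (hd1 : 1 < d)
    (hdeg : indChar H β 1 = (minDeg G : ℂ)) :
    H.index < minDeg G ∧ IsSumOfLinear G (indChar H (fun _ => 1)) ∧
      commutator G ≤ H := by
  have hminDeg : minDeg G = H.index * d := by
    have := hdeg.symm.trans (indChar_apply_one H β)
    rw [hd] at this
    exact_mod_cast this
  have hindex : H.index < minDeg G :=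
    hminDeg ▸ lt_mul_of_one_lt_right (Nat.pos_of_ne_zero H.index_ne_zero_of_finite) hd1
  have hlinear : IsSumOfLinear G (indChar H (fun _ => 1)) := by
    classical
    rw [indChar_one_eq_character_permRep]
    refine isSumOfLinear_character_of_finrank_lt_minDeg _ ?_
    rwa [finrank_fintype_fun_eq_card, ← Nat.card_eq_fintype_card, ← H.index_eq_card]
  exact ⟨hindex, hlinear, fun g hg =>
    mem_of_indChar_one_apply_eq H (hlinear.apply_eq_apply_one_of_mem_commutator hg)⟩

/-- If `χ = β^G` is irreducible of degree `m(G)` with `β(1) > 1`, then `|G:H| < m(G)`,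
`(1_H)^G` is a sum of linear characters, and `G' ≤ H`. -/
theorem stmt19 (G : Type) [Group G] [Fintype G] (H : Subgroup G) (β : ↥H → ℂ)
    (hβ : IsChar ↥H β) (d : ℕ) (hd : β 1 = (d : ℂ)) (hd1 : 1 < d)
    (hirr : IsIrrChar G (indChar H β)) (hdeg : indChar H β 1 = (minDeg G : ℂ)) :
    H.index < minDeg G ∧ IsSumOfLinear G (indChar H (fun _ => 1)) ∧
      commutator G ≤ H :=
  stmt19_general G H β d hd hd1 hdeg

end
end
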